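/- arXiv:2105.07262 — 7 statements merged into one kernel-verified Lean document; each statement's English description precedes it below -/
import Mathlib

section
/- Let h, f ∈ ℝ⟦X⟧ have constant coefficient 0 and nonzero linear coefficient, with compositional inverses h̄, f̄ (series with constant coefficient 0 satisfying h∘h̄ = h̄∘h = X and f∘f̄ = f̄∘f = X), and let A_h, A_f ∈ ℝ⟦X⟧ satisfy h̄·A_h = X and f̄·A_f = X (so A_h and A_f are units). Then h∘f = f∘h if and only if A_f · (A_h ∘ (X·A_f⁻¹)) = A_h · (A_f ∘ (X·A_h⁻¹)). -/
/-!
Since `X * A⁻¹` is the inverse series, `A_f · (A_h ∘ f̄) · (h̄ ∘ f̄) = A_f · f̄ = X` and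
symmetrically `A_h · (A_f ∘ h̄) · (f̄ ∘ h̄) = X`. So the identity of A-functions says exactly that
`f̄ ∘ h̄ = h̄ ∘ f̄`, i.e. that `h ∘ f` and `f ∘ h` have the same compositional inverse.
-/

open PowerSeries

/-- Substitution (composition) of formal power series: `psComp g f = g ∘ f`,
the substitution of `f` into `g`.  When `f` has zero constant coefficient, the
`n`-th coefficient of `g ∘ f` is `∑_{k=0}^{n} g_k · [zⁿ] fᵏ`. -/
noncomputable def psComp (g f : PowerSeries ℝ) : PowerSeries ℝ :=
  PowerSeries.mk fun n => ∑ k ∈ Finset.range (n + 1),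
    PowerSeries.coeff k g * PowerSeries.coeff n (f ^ k)

theorem psComp_eq_subst {g f : ℝ⟦X⟧} (hf : constantCoeff f = 0) : psComp g f = subst f g := by
  ext n
  have hvanish : ∀ d, n < d → coeff n (f ^ d) = 0 := fun d hd =>
    X_pow_dvd_iff.mp (pow_dvd_pow_of_dvd (X_dvd_iff.mpr hf) d) n hd
  rw [coeff_subst' (HasSubst.of_constantCoeff_zero' hf),
    finsum_eq_sum_of_support_subset (s := Finset.range (n + 1))]
  · simp [psComp]
  · intro d hd
    rw [Finset.coe_range, Set.mem_Iio]
    by_contra! hnd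
    exact hd (by simp only [hvanish d hnd, smul_zero])

namespace PowerSeries

section Subst

variable {R : Type*} [CommRing R]

theorem HasSubst.subst {a b : R⟦X⟧} (ha : HasSubst a) (hb : HasSubst b) :
    HasSubst (subst b a) := by
  simpa only [coe_substAlgHom] using ha.comp hb

theorem subst_left_inv_eq_right_inv {l F r : R⟦X⟧} (hF : HasSubst F) (hr : HasSubst r)
    (hl : subst F l = X) (hFr : subst r F = X) : l = r := by
  rw [← X_subst l, ← hFr, ← subst_comp_subst_apply hF hr, hl, subst_X hr]

theorem subst_subst_eq_X_of_subst_eq_X {a b c d : R⟦X⟧} (hb : HasSubst b) (hc : HasSubst c)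
    (hd : HasSubst d) (hab : subst b a = X) (hcd : subst d c = X) :
    subst (subst b d) (subst c a) = X := by
  rw [subst_comp_subst_apply hc (hd.subst hb), ← subst_comp_subst_apply hd hb, hcd, subst_X hb,
    hab]

theorem subst_comm_iff_of_inverses {f h fbar hbar : R⟦X⟧} (hf : HasSubst f) (hh : HasSubst h)
    (hfb : HasSubst fbar) (hhb : HasSubst hbar)
    (hhb1 : subst hbar h = X) (hhb2 : subst h hbar = X)
    (hfb1 : subst fbar f = X) (hfb2 : subst f fbar = X) :
    subst f h = subst h f ↔ subst hbar fbar = subst fbar hbar := by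
  have hcF : subst (subst f h) (subst hbar fbar) = X :=
    subst_subst_eq_X_of_subst_eq_X hf hhb hh hfb2 hhb2
  have hFc : subst (subst hbar fbar) (subst f h) = X :=
    subst_subst_eq_X_of_subst_eq_X hhb hf hfb hhb1 hfb1
  have hdG : subst (subst h f) (subst fbar hbar) = X :=
    subst_subst_eq_X_of_subst_eq_X hh hfb hf hhb2 hfb2
  have hGd : subst (subst fbar hbar) (subst h f) = X :=
    subst_subst_eq_X_of_subst_eq_X hfb hh hhb hfb1 hhb1
  constructor
  · intro hcomm
    exact subst_left_inv_eq_right_inv (hf.subst hh) (hhb.subst hfb) (hcomm ▸ hcF) hGd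
  · intro hinv_comm
    exact subst_left_inv_eq_right_inv (hfb.subst hhb) (hf.subst hh) hFc (hinv_comm ▸ hdG)

theorem mul_subst_mul_subst_eq_X {A B b c : R⟦X⟧} (hc : HasSubst c) (hbA : b * A = X)
    (hcB : c * B = X) : B * subst c A * subst c b = X := by
  rw [mul_assoc, mul_comm (subst c A), ← subst_mul hc, hbA, subst_X hc, mul_comm, hcB]

theorem constantCoeff_ne_zero_of_mul_eq_X [Nontrivial R] {A b : R⟦X⟧}
    (hb : constantCoeff b = 0) (hbA : b * A = X) : constantCoeff A ≠ 0 := by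
  intro hA
  have hX2 : (X : R⟦X⟧) ^ 2 ∣ X := by
    nth_rw 2 [← hbA]
    exact pow_two (X : R⟦X⟧) ▸ mul_dvd_mul (X_dvd_iff.mpr hb) (X_dvd_iff.mpr hA)
  simpa using X_pow_dvd_iff.mp hX2 1 one_lt_two

end Subst

theorem X_mul_inv_eq_of_mul_eq_X {k : Type*} [Field k] {A b : k⟦X⟧}
    (hb : constantCoeff b = 0) (hbA : b * A = X) : X * A⁻¹ = b := by
  rw [← hbA, mul_assoc, PowerSeries.mul_inv_cancel A (constantCoeff_ne_zero_of_mul_eq_X hb hbA),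
    mul_one]

end PowerSeries

theorem eq_iff_eq_of_mul_eq_of_mul_eq {M : Type*} [CommMonoidWithZero M] [IsCancelMulZero M]
    {x u v c d : M} (hx : x ≠ 0) (hud : u * d = x) (hvc : v * c = x) : u = v ↔ c = d := by
  constructor
  · rintro rfl
    exact mul_left_cancel₀ (left_ne_zero_of_mul (hud ▸ hx)) (hvc.trans hud.symm)
  · rintro rfl
    exact mul_right_cancel₀ (right_ne_zero_of_mul (hud ▸ hx)) (hud.trans hvc.symm)

theorem stmt1_general (h f hbar fbar Ah Af : PowerSeries ℝ)
    (hh0 : constantCoeff h = 0)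
    (hf0 : constantCoeff f = 0)
    (hhb0 : constantCoeff hbar = 0) (hfb0 : constantCoeff fbar = 0)
    (hhb1 : psComp h hbar = X) (hhb2 : psComp hbar h = X)
    (hfb1 : psComp f fbar = X) (hfb2 : psComp fbar f = X)
    (hAh : hbar * Ah = X) (hAf : fbar * Af = X) :
    psComp h f = psComp f h ↔
      Af * psComp Ah (X * Af⁻¹) = Ah * psComp Af (X * Ah⁻¹) := by
  rw [X_mul_inv_eq_of_mul_eq_X hfb0 hAf, X_mul_inv_eq_of_mul_eq_X hhb0 hAh,
    psComp_eq_subst hf0, psComp_eq_subst hh0, psComp_eq_subst hfb0, psComp_eq_subst hhb0]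
  rw [psComp_eq_subst hhb0] at hhb1
  rw [psComp_eq_subst hh0] at hhb2
  rw [psComp_eq_subst hfb0] at hfb1
  rw [psComp_eq_subst hf0] at hfb2
  have hh := HasSubst.of_constantCoeff_zero' hh0
  have hf := HasSubst.of_constantCoeff_zero' hf0
  have hhb := HasSubst.of_constantCoeff_zero' hhb0
  have hfb := HasSubst.of_constantCoeff_zero' hfb0
  rw [subst_comm_iff_of_inverses hf hh hfb hhb hhb1 hhb2 hfb1 hfb2]
  exact (eq_iff_eq_of_mul_eq_of_mul_eq X_ne_zero (mul_subst_mul_subst_eq_X hfb hAh hAf)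
    (mul_subst_mul_subst_eq_X hhb hAf hAh)).symm

theorem stmt1 (h f hbar fbar Ah Af : PowerSeries ℝ)
    (hh0 : constantCoeff h = 0) (hh1 : coeff 1 h ≠ 0)
    (hf0 : constantCoeff f = 0) (hf1 : coeff 1 f ≠ 0)
    (hhb0 : constantCoeff hbar = 0) (hfb0 : constantCoeff fbar = 0)
    (hhb1 : psComp h hbar = X) (hhb2 : psComp hbar h = X)
    (hfb1 : psComp f fbar = X) (hfb2 : psComp fbar f = X)
    (hAh : hbar * Ah = X) (hAf : fbar * Af = X) :
    psComp h f = psComp f h ↔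
      Af * psComp Ah (X * Af⁻¹) = Ah * psComp Af (X * Ah⁻¹) :=
  stmt1_general h f hbar fbar Ah Af hh0 hf0 hhb0 hfb0 hhb1 hhb2 hfb1 hfb2 hAh hAf
end

section
/- Let h, f ∈ ℝ⟦X⟧ have constant coefficient 0 and nonzero linear coefficient, with compositional inverses h̄, f̄ (series with constant coefficient 0 satisfying h∘h̄ = h̄∘h = X and f∘f̄ = f̄∘f = X), and let A_h, A_f ∈ ℝ⟦X⟧ satisfy h̄·A_h = X and f̄·A_f = X. Then h∘f = X and f∘h = X if and only if A_f · (A_h ∘ (X·A_f⁻¹)) = 1 and A_h · (A_f ∘ (X·A_h⁻¹)) = 1. -/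
/-
Identifying `psComp g c` with Mathlib's `g.subst c` makes composition associative with unit `X`,
so a two-sided compositional inverse is unique: `h ∘ f = X ↔ h = f̄` and `f ∘ h = X ↔ f = h̄`.
On the other side, `X · A_f⁻¹ = f̄`, and `(h̄ ∘ f̄) · (A_h ∘ f̄) = (h̄ · A_h) ∘ f̄ = f̄ = X / A_f`,
so `A_f · (A_h ∘ f̄) = 1` says exactly `h̄ ∘ f̄ = X`, i.e. `h̄ = f`; symmetrically the second
identity says `f̄ = h`.
-/

open PowerSeries

namespace PowerSeries

theorem coeff_pow_eq_zero_of_lt {R : Type*} [CommRing R] {c : R⟦X⟧} (hc : constantCoeff c = 0)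
    {n k : ℕ} (hnk : n < k) : coeff n (c ^ k) = 0 :=
  coeff_of_lt_order n <| (Nat.cast_lt.2 hnk).trans_le (le_order_pow_of_constantCoeff_eq_zero k hc)

theorem constantCoeff_ne_zero_of_mul_eq_X_s2 {R : Type*} [CommRing R] [Nontrivial R] {u v : R⟦X⟧}
    (hu : constantCoeff u = 0) (huv : u * v = X) : constantCoeff v ≠ 0 := by
  intro hv
  have := congrArg (coeff 1) huv
  rw [coeff_one_mul, hu, hv, coeff_one_X] at this
  simp at this

theorem X_mul_inv_eq_of_mul_eq_X_s2 {k : Type*} [Field k] {u v : k⟦X⟧} (hu : constantCoeff u = 0)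
    (huv : u * v = X) : X * v⁻¹ = u := by
  rw [← huv, mul_assoc, PowerSeries.mul_inv_cancel v (constantCoeff_ne_zero_of_mul_eq_X_s2 hu huv),
    mul_one]

end PowerSeries

theorem psComp_eq_subst_s2 (g : ℝ⟦X⟧) {c : ℝ⟦X⟧} (hc : constantCoeff c = 0) :
    psComp g c = g.subst c := by
  ext n
  rw [psComp, coeff_mk, coeff_subst' (HasSubst.of_constantCoeff_zero' hc)]
  refine (finsum_eq_sum_of_support_subset _ fun k hk => ?_).symm
  rw [Function.mem_support] at hk
  rw [Finset.coe_range, Set.mem_Iio, Nat.lt_succ_iff]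
  by_contra! hnk
  exact hk (by rw [coeff_pow_eq_zero_of_lt hc hnk, mul_zero])

theorem psComp_assoc (a : ℝ⟦X⟧) {b c : ℝ⟦X⟧} (hb : constantCoeff b = 0)
    (hc : constantCoeff c = 0) : psComp (psComp a b) c = psComp a (psComp b c) := by
  have hbc : constantCoeff (psComp b c) = 0 := by
    rw [psComp_eq_subst_s2 b hc]
    exact constantCoeff_subst_eq_zero hc _ hb
  rw [psComp_eq_subst_s2 _ hc, psComp_eq_subst_s2 _ hb, psComp_eq_subst_s2 _ hbc, psComp_eq_subst_s2 _ hc,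
    subst_comp_subst_apply (HasSubst.of_constantCoeff_zero' hb)
      (HasSubst.of_constantCoeff_zero' hc)]

theorem psComp_X {c : ℝ⟦X⟧} (hc : constantCoeff c = 0) : psComp X c = c := by
  rw [psComp_eq_subst_s2 _ hc, subst_X (HasSubst.of_constantCoeff_zero' hc)]

theorem psComp_X_right (g : ℝ⟦X⟧) : psComp g X = g := by
  rw [psComp_eq_subst_s2 _ constantCoeff_X, X_subst]

theorem psComp_mul (a b : ℝ⟦X⟧) {c : ℝ⟦X⟧} (hc : constantCoeff c = 0) :
    psComp (a * b) c = psComp a c * psComp b c := by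
  simp only [psComp_eq_subst_s2 _ hc, subst_mul (HasSubst.of_constantCoeff_zero' hc)]

theorem left_inv_eq_right_inv_psComp {a b c : ℝ⟦X⟧} (hb : constantCoeff b = 0)
    (hc : constantCoeff c = 0) (hab : psComp a b = X) (hbc : psComp b c = X) : a = c := by
  rw [← psComp_X_right a, ← hbc, ← psComp_assoc a hb hc, hab, psComp_X hc]

theorem psComp_eq_X_iff {a c cbar : ℝ⟦X⟧} (hc : constantCoeff c = 0)
    (hcbar : constantCoeff cbar = 0) (h₁ : psComp c cbar = X) (h₂ : psComp cbar c = X) :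
    psComp a c = X ↔ a = cbar :=
  ⟨fun h => left_inv_eq_right_inv_psComp hc hcbar h h₁, fun h => h ▸ h₂⟩

theorem mul_psComp_eq_one_iff {u A v B : ℝ⟦X⟧} (hv : constantCoeff v = 0) (huA : u * A = X)
    (hvB : v * B = X) : B * psComp A (X * B⁻¹) = 1 ↔ psComp u v = X := by
  rw [X_mul_inv_eq_of_mul_eq_X_s2 hv hvB]
  have key : psComp u v * psComp A v = v := by
    rw [← psComp_mul _ _ hv, huA, psComp_X hv]
  constructor
  · intro h
    calc psComp u v = B * (psComp u v * psComp A v) := by rw [mul_left_comm, h, mul_one]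
      _ = X := by rw [key, mul_comm, hvB]
  · intro h
    rw [h] at key
    apply mul_left_cancel₀ (X_ne_zero (R := ℝ))
    rw [mul_one, mul_left_comm, key, mul_comm, hvB]

theorem stmt2_general (h f hbar fbar Ah Af : PowerSeries ℝ)
    (hh0 : constantCoeff h = 0)
    (hf0 : constantCoeff f = 0)
    (hhb0 : constantCoeff hbar = 0) (hfb0 : constantCoeff fbar = 0)
    (hhb1 : psComp h hbar = X) (hhb2 : psComp hbar h = X)
    (hfb1 : psComp f fbar = X) (hfb2 : psComp fbar f = X)
    (hAh : hbar * Ah = X) (hAf : fbar * Af = X) :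
    (psComp h f = X ∧ psComp f h = X) ↔
      (Af * psComp Ah (X * Af⁻¹) = 1 ∧ Ah * psComp Af (X * Ah⁻¹) = 1) := by
  rw [mul_psComp_eq_one_iff hfb0 hAh hAf, mul_psComp_eq_one_iff hhb0 hAf hAh,
    psComp_eq_X_iff hf0 hfb0 hfb1 hfb2, psComp_eq_X_iff hh0 hhb0 hhb1 hhb2,
    psComp_eq_X_iff hfb0 hf0 hfb2 hfb1, psComp_eq_X_iff hhb0 hh0 hhb2 hhb1]
  exact ⟨fun ⟨hfb, hhb⟩ => ⟨hhb.symm, hfb.symm⟩, fun ⟨hhb, hfb⟩ => ⟨hfb.symm, hhb.symm⟩⟩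

theorem stmt2 (h f hbar fbar Ah Af : PowerSeries ℝ)
    (hh0 : constantCoeff h = 0) (hh1 : coeff 1 h ≠ 0)
    (hf0 : constantCoeff f = 0) (hf1 : coeff 1 f ≠ 0)
    (hhb0 : constantCoeff hbar = 0) (hfb0 : constantCoeff fbar = 0)
    (hhb1 : psComp h hbar = X) (hhb2 : psComp hbar h = X)
    (hfb1 : psComp f fbar = X) (hfb2 : psComp fbar f = X)
    (hAh : hbar * Ah = X) (hAf : fbar * Af = X) :
    (psComp h f = X ∧ psComp f h = X) ↔
      (Af * psComp Ah (X * Af⁻¹) = 1 ∧ Ah * psComp Af (X * Ah⁻¹) = 1) :=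
  stmt2_general h f hbar fbar Ah Af hh0 hf0 hhb0 hfb0 hhb1 hhb2 hfb1 hfb2 hAh hAf
end

section
/- Let A ∈ ℝ⟦X⟧ with coefficients a_j = coeff j A. Then for every n ≥ 1, the n-th coefficient of A ∘ (X·(1−X)⁻¹) equals Σ_{j=1}^{n} C(n−1, j−1)·a_j, where C denotes the binomial coefficient. -/
/-! The `k = 0` term of the composition does not reach `Xⁿ` for `n ≥ 1`. For `k ≥ 1`,
`(X (1 - X)⁻¹)ᵏ = Xᵏ (1 - X)⁻ᵏ`, and the negative binomial series `[Xᵐ] (1 - X)⁻ᵏ = C(k - 1 + m, k - 1)`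
at `m = n - k` gives `C(n - 1, k - 1)`. -/

open PowerSeries

theorem PowerSeries.inv_one_sub_X_pow {K : Type*} [Field K] (d : ℕ) :
    ((1 - X : K⟦X⟧)⁻¹) ^ d = invOneSubPow K d := by
  refine Units.mul_inv_eq_one.mp ?_
  rw [← Units.inv_eq_val_inv, invOneSubPow_inv_eq_one_sub_pow, ← mul_pow,
    PowerSeries.inv_mul_cancel _ (by simp), one_pow]

theorem PowerSeries.coeff_X_mul_inv_one_sub_X_pow {K : Type*} [Field K] {n k : ℕ}
    (hk : 1 ≤ k) (hkn : k ≤ n) :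
    coeff n ((X * (1 - X)⁻¹ : K⟦X⟧) ^ k) = (n - 1).choose (k - 1) := by
  rw [mul_pow, inv_one_sub_X_pow, invOneSubPow_val_eq_mk_sub_one_add_choose_of_pos K k hk,
    coeff_X_pow_mul', if_pos hkn, coeff_mk, show k - 1 + (n - k) = n - 1 by omega]

theorem coeff_psComp_of_pos (g f : ℝ⟦X⟧) {n : ℕ} (hn : 1 ≤ n) :
    coeff n (psComp g f) = ∑ k ∈ Finset.Icc 1 n, coeff k g * coeff n (f ^ k) := by
  rw [psComp, coeff_mk, Finset.range_eq_Ico, Finset.sum_eq_sum_Ico_succ_bot (by omega),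
    Finset.Ico_add_one_right_eq_Icc, pow_zero, coeff_one, if_neg (by omega), mul_zero, zero_add]

theorem stmt6 (A : PowerSeries ℝ) (n : ℕ) (hn : 1 ≤ n) :
    coeff n (psComp A (X * (1 - X)⁻¹))
      = ∑ j ∈ Finset.Icc 1 n, ((n - 1).choose (j - 1) : ℝ) * coeff j A := by
  rw [coeff_psComp_of_pos _ _ hn]
  refine Finset.sum_congr rfl fun j hj => ?_
  obtain ⟨hj₁, hjn⟩ := Finset.mem_Icc.mp hj
  rw [coeff_X_mul_inv_one_sub_X_pow hj₁ hjn, mul_comm]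
end

section
/- Let g, h ∈ ℝ⟦X⟧ such that h has constant coefficient 0 and the linear coefficient of g is nonzero (coeff 1 g ≠ 0). If g∘h = g, then h = X. -/
/-!
If `h ≡ X` modulo `Xⁿ` and `X ∣ h`, then `hᵏ ≡ Xᵏ` modulo `Xⁿ⁺¹` for every `k ≥ 2`. Hence in the
`n`-th coefficient of `g ∘ h - g ∘ X = g ∘ h - g` only the linear term of `g` survives, and it equals
`g₁ · [Xⁿ](h - X)`. So `g ∘ h = g` and `g₁ ≠ 0` give `h ≡ X` modulo `Xⁿ⁺¹`, and induction on `n`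
gives `h = X`.
-/

open PowerSeries

-- from `x^(k+1) - y^(k+1) = (x - y) ∑ xⁱ y^(k-i)`, each summand being divisible by `c^k`
theorem pow_mul_dvd_pow_succ_sub_pow_succ {R : Type*} [CommRing R] {a b c d : R}
    (ha : c ∣ a) (hb : c ∣ b) (hab : d ∣ a - b) (k : ℕ) :
    c ^ k * d ∣ a ^ (k + 1) - b ^ (k + 1) := by
  rw [← geom_sum₂_mul]
  refine mul_dvd_mul (Finset.dvd_sum fun i hi => ?_) hab
  rw [add_tsub_cancel_right, ← pow_mul_pow_sub c (Finset.mem_range_succ_iff.mp hi)]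
  exact mul_dvd_mul (pow_dvd_pow_of_dvd ha i) (pow_dvd_pow_of_dvd hb _)

theorem coeff_psComp (g f : PowerSeries ℝ) (n : ℕ) :
    coeff n (psComp g f) = ∑ k ∈ Finset.range (n + 1), coeff k g * coeff n (f ^ k) :=
  coeff_mk _ _

theorem psComp_X_s8 (g : PowerSeries ℝ) : psComp g X = g := by
  ext n
  rw [coeff_psComp, Finset.sum_eq_single n]
  · rw [coeff_X_pow_self, mul_one]
  · intro k _ hkn
    rw [coeff_X_pow, if_neg (Ne.symm hkn), mul_zero]
  · simp

theorem coeff_pow_eq_coeff_X_pow_of_X_pow_dvd_sub_X {R : Type*} [CommRing R] {h : R⟦X⟧} {n k : ℕ}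
    (hh0 : constantCoeff h = 0) (hn : (X : R⟦X⟧) ^ n ∣ h - X) (hk : k ≠ 1) :
    coeff n (h ^ k) = coeff n (X ^ k : R⟦X⟧) := by
  obtain _ | _ | j := k
  · rfl
  · contradiction
  · have hdvd : (X : R⟦X⟧) ^ (n + 1) ∣ h ^ (j + 2) - X ^ (j + 2) := by
      rw [pow_succ']
      exact (mul_dvd_mul_right (dvd_pow_self X j.succ_ne_zero) _).trans
        (pow_mul_dvd_pow_succ_sub_pow_succ (X_dvd_iff.mpr hh0) dvd_rfl hn (j + 1))
    rw [← sub_eq_zero, ← map_sub]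
    exact X_pow_dvd_iff.mp hdvd n n.lt_succ_self

theorem coeff_psComp_of_X_pow_dvd_sub_X {g h : PowerSeries ℝ} {n : ℕ}
    (hh0 : constantCoeff h = 0) (hn : X ^ n ∣ h - X) :
    coeff n (psComp g h) = coeff n g + coeff 1 g * coeff n (h - X) := by
  suffices coeff n (psComp g h) - coeff n (psComp g X) = coeff 1 g * coeff n (h - X) by
    rwa [psComp_X_s8, sub_eq_iff_eq_add'] at this
  rw [coeff_psComp, coeff_psComp, ← Finset.sum_sub_distrib,
    Finset.sum_eq_single 1]
  · rw [pow_one, pow_one, ← mul_sub, map_sub]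
  · intro k _ hk
    rw [coeff_pow_eq_coeff_X_pow_of_X_pow_dvd_sub_X hh0 hn hk, sub_self]
  · intro h1
    obtain rfl : n = 0 := by simpa using h1
    simp [hh0]

theorem stmt8 (g h : PowerSeries ℝ)
    (hh0 : constantCoeff h = 0) (hg1 : coeff 1 g ≠ 0)
    (hcomm : psComp g h = g) : h = X := by
  rw [← sub_eq_zero]
  ext n
  induction n using Nat.strong_induction_on with
  | _ n ih =>
    have hn : X ^ n ∣ h - X := X_pow_dvd_iff.mpr ih
    have := coeff_psComp_of_X_pow_dvd_sub_X (g := g) hh0 hn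
    rw [hcomm, left_eq_add, mul_eq_zero] at this
    simpa [hg1] using this
end

section
/- Let h ∈ ℝ⟦X⟧ have constant coefficient 0 and linear coefficient equal to 1, and suppose h ≠ X. If g ∈ ℝ⟦X⟧ satisfies g∘h = g, then g is a constant series, i.e. g = C(coeff 0 g). -/
open PowerSeries

variable {R : Type*} [CommRing R]

theorem coeff_one_add_pow_of_lt_two_mul {v : R⟦X⟧} {m j : ℕ} (hv : X ^ m ∣ v) (hj : j < 2 * m)
    (k : ℕ) : coeff j ((1 + v) ^ k) = coeff j 1 + k * coeff j v := by
  have hsq : X ^ (2 * m) ∣ (1 + v) ^ k - v * (k : R⟦X⟧) - 1 := by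
    have h := sq_dvd_add_pow_sub_sub v 1 k
    simp only [one_pow, one_mul] at h
    rw [mul_comm, pow_mul]
    exact (pow_dvd_pow_of_dvd hv 2).trans h
  have hj_coeff := X_pow_dvd_iff.mp hsq j hj
  rw [map_sub, map_sub, sub_sub, sub_eq_zero, ← map_natCast (C (R := R)), coeff_mul_C] at hj_coeff
  rw [hj_coeff, add_comm, mul_comm]

theorem coeff_add_X_mul_one_add_pow {v : R⟦X⟧} {m j : ℕ} (hv : X ^ m ∣ v) (hj : j < 2 * m)
    (k : ℕ) : coeff (j + k) ((X * (1 + v)) ^ k) = coeff j 1 + k * coeff j v := by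
  rw [mul_pow, mul_comm, coeff_mul_X_pow, coeff_one_add_pow_of_lt_two_mul hv hj]

theorem coeff_add_psComp_X_mul_one_add {g v : ℝ⟦X⟧} {m n : ℕ} (hm : 1 ≤ m) (hv : X ^ m ∣ v)
    (hg : ∀ k < n, 1 ≤ k → coeff k g = 0) :
    coeff (n + m) (psComp g (X * (1 + v))) = coeff n g * n * coeff m v + coeff (n + m) g := by
  have hv_low : ∀ i < m, coeff i v = 0 := X_pow_dvd_iff.mp hv
  have hpow : ∀ k, n ≤ k → k ≤ n + m →
      coeff (n + m) ((X * (1 + v)) ^ k) = coeff (n + m - k) 1 + k * coeff (n + m - k) v := by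
    intro k hnk hkN
    simpa only [Nat.sub_add_cancel hkN] using
      coeff_add_X_mul_one_add_pow hv (j := n + m - k) (by omega) k
  rw [psComp, coeff_mk, Finset.sum_eq_add_of_mem n (n + m) (by simp) (by simp) (by omega)]
  · rw [hpow n le_rfl (by omega), hpow (n + m) (by omega) le_rfl, Nat.add_sub_cancel_left,
      Nat.sub_self, hv_low 0 hm, coeff_one, coeff_one, if_neg (by omega), if_pos rfl]
    ring
  · rintro k hk ⟨hkn, hkN⟩
    rw [Finset.mem_range] at hk
    rcases Nat.lt_or_gt_of_ne hkn with hlt | hgt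
    · rcases Nat.eq_zero_or_pos k with rfl | hpos
      · rw [pow_zero, coeff_one, if_neg (by omega), mul_zero]
      · rw [hg k hlt hpos, zero_mul]
    · rw [hpow k hgt.le (by omega), coeff_one, if_neg (by omega), hv_low _ (by omega)]
      ring

theorem stmt11 (h : PowerSeries ℝ)
    (hh0 : constantCoeff h = 0) (hh1 : coeff 1 h = 1) (hhX : h ≠ X)
    (g : PowerSeries ℝ) (hg : psComp g h = g) :
    g = C (coeff 0 g) := by
  obtain ⟨u, rfl⟩ := X_dvd_iff.mpr hh0
  obtain ⟨v, rfl⟩ : ∃ v, u = 1 + v := ⟨u - 1, by ring⟩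
  have hv0 : v ≠ 0 := by
    rintro rfl
    simp at hhX
  obtain ⟨m, hvm, hvm_ne⟩ : ∃ m, X ^ m ∣ v ∧ coeff m v ≠ 0 :=
    ⟨_, X_pow_order_dvd, coeff_order hv0⟩
  have hm : 1 ≤ m := by
    have hv_const : coeff 0 v = 0 := by simpa [coeff_succ_X_mul] using hh1
    exact Nat.one_le_iff_ne_zero.mpr fun hm0 => hvm_ne (by rwa [hm0])
  have hcoeff : ∀ n, 1 ≤ n → coeff n g = 0 := by
    intro n
    induction n using Nat.strong_induction_on with
    | _ n ih =>
      intro hn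
      have hcomp := coeff_add_psComp_X_mul_one_add hm hvm ih
      rw [hg, eq_comm, add_eq_right] at hcomp
      simpa [hvm_ne, Nat.one_le_iff_ne_zero.mp hn] using hcomp
  ext n
  rcases Nat.eq_zero_or_pos n with rfl | hn
  · simp
  · rw [hcoeff n hn, coeff_C, if_neg hn.ne']
end

section
/- Let g, f, b ∈ ℝ⟦X⟧ with f having constant coefficient 0. Then for every n ∈ ℕ, coeff n (g·(b∘f)) = Σ_{k=0}^{n} (coeff k b)·(coeff n (g·f^k)). -/
open PowerSeries

theorem PowerSeries.coeff_pow_eq_zero_of_lt_s13 {R : Type*} [CommSemiring R] {f : PowerSeries R}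
    (hf : constantCoeff f = 0) {j k : ℕ} (h : j < k) : coeff j (f ^ k) = 0 :=
  coeff_of_lt_order _ <| (Nat.cast_lt.mpr h).trans_le <|
    le_order_pow_of_constantCoeff_eq_zero k hf

theorem coeff_psComp_of_le {b f : PowerSeries ℝ} (hf : constantCoeff f = 0) {m N : ℕ}
    (h : m ≤ N) :
    coeff m (psComp b f) = ∑ k ∈ Finset.range (N + 1), coeff k b * coeff m (f ^ k) := by
  rw [psComp, coeff_mk]
  refine Finset.sum_subset (Finset.range_subset_range.mpr (by omega)) fun k _ hk => ?_
  rw [coeff_pow_eq_zero_of_lt_s13 hf (by simpa using hk), mul_zero]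

theorem trunc_psComp {b f : PowerSeries ℝ} (hf : constantCoeff f = 0) (N : ℕ) :
    trunc (N + 1) (psComp b f)
      = trunc (N + 1) (∑ k ∈ Finset.range (N + 1), C (coeff k b) * f ^ k) := by
  ext m
  rw [coeff_trunc, coeff_trunc]
  split_ifs with hm
  · simp [coeff_psComp_of_le hf (Nat.lt_succ_iff.mp hm), map_sum, coeff_C_mul]
  · rfl

theorem stmt13 (g f b : PowerSeries ℝ) (hf0 : constantCoeff f = 0) (n : ℕ) :
    coeff n (g * psComp b f)
      = ∑ k ∈ Finset.range (n + 1), coeff k b * coeff n (g * f ^ k) := by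
  calc coeff n (g * psComp b f)
      = coeff n (g * ∑ k ∈ Finset.range (n + 1), C (coeff k b) * f ^ k) := by
        rw [coeff_mul_eq_coeff_trunc_mul_trunc _ _ n.lt_succ_self, trunc_psComp hf0,
          ← coeff_mul_eq_coeff_trunc_mul_trunc _ _ n.lt_succ_self]
    _ = ∑ k ∈ Finset.range (n + 1), coeff k b * coeff n (g * f ^ k) := by
        simp only [Finset.mul_sum, mul_left_comm g, map_sum, coeff_C_mul]
end

section
/- Let G be a group, h ∈ G, and let T = {g ∈ G : h·g·h⁻¹ = g⁻¹}. Then: (i) 1 ∈ T; (ii) if g ∈ T then g⁻¹ ∈ T; (iii) if x, y ∈ T then x·y·x ∈ T; and moreover (iv) if x, y ∈ T then x·y⁻¹·x ∈ T. -/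
theorem stmt18 {G : Type*} [Group G] (h : G)
    (T : Set G) (hT : T = {g : G | h * g * h⁻¹ = g⁻¹}) :
    (1 : G) ∈ T ∧
    (∀ g ∈ T, g⁻¹ ∈ T) ∧
    (∀ x ∈ T, ∀ y ∈ T, x * y * x ∈ T) ∧
    (∀ x ∈ T, ∀ y ∈ T, x * y⁻¹ * x ∈ T) := by
  subst hT
  simp only [Set.mem_setOf_eq]
  refine ⟨by group, fun g hg => ?_, fun x hx y hy => ?_, fun x hx y hy => ?_⟩
  · have : h * g⁻¹ * h⁻¹ = (h * g * h⁻¹)⁻¹ := by group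
    rw [this, hg, inv_inv]
  · have : h * (x * y * x) * h⁻¹ =
      (h * x * h⁻¹) * (h * y * h⁻¹) * (h * x * h⁻¹) := by group
    rw [this, hx, hy]; group
  · have : h * (x * y⁻¹ * x) * h⁻¹ =
      (h * x * h⁻¹) * (h * y * h⁻¹)⁻¹ * (h * x * h⁻¹) := by group
    rw [this, hx, hy]; group
end
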